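/- arXiv:1408.3500 — 3 statements merged into one kernel-verified Lean document; each statement's English description precedes it below -/
import Mathlib

section
/- For vectors x, y in R^n, x is weakly majorized by y from above (i.e., for every k, the sum of the k smallest entries of x is at least the sum of the k smallest entries of y) if and only if there exists a vector z in R^n with x_i ≥ z_i for all i and z majorized by y (i.e., partial sums of z in decreasing order are bounded by those of y, with equal total sums). -/
/-- Sum of the `k` smallest entries of `x`: the minimum of `∑ i ∈ s, x i`
over subsets `s` of cardinality `k`. -/
noncomputable def smallSum {n : ℕ} (x : Fin n → ℝ) (k : ℕ) : ℝ :=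
  sInf ((fun s : Finset (Fin n) => ∑ i ∈ s, x i) '' {s | s.card = k})

/-- Sum of the `k` largest entries of `x`. -/
noncomputable def largeSum {n : ℕ} (x : Fin n → ℝ) (k : ℕ) : ℝ :=
  sSup ((fun s : Finset (Fin n) => ∑ i ∈ s, x i) '' {s | s.card = k})

/-- `x` is majorized by `y` (`x ≼ y`). -/
def Majorized {n : ℕ} (x y : Fin n → ℝ) : Prop :=
  (∀ k, k ≤ n → largeSum x k ≤ largeSum y k) ∧ ∑ i, x i = ∑ i, y i

/-- `x ≼^w y`: weak majorization from above. -/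
def WeakMajAbove {n : ℕ} (x y : Fin n → ℝ) : Prop :=
  ∀ k, 1 ≤ k → k ≤ n → smallSum y k ≤ smallSum x k

/-- `x ≺^w y`: strict weak majorization from above. -/
def StrictWeakMajAbove {n : ℕ} (x y : Fin n → ℝ) : Prop :=
  ∀ k, 1 ≤ k → k ≤ n → smallSum y k < smallSum x k

/-!
Clip `x` from above at the level `t` for which `∑ i, min (x i) t = ∑ i, y i`. For a `j`-set
`s`, the sum of `min (x i) t` over `s` is `∑ i ∈ A, x i + (j - #A) • t` with
`A = {i ∈ s | x i < t}`. The line `k ↦ ∑ i ∈ A, x i + (k - #A) • t` lies above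
`k ↦ smallSum y k` at `k = #A` (by weak majorization) and at `k = n` (by the choice of `t`),
hence in between, because `k ↦ smallSum y k` is convex. The converse is monotonicity of
`smallSum` together with the duality `largeSum x k = ∑ i, x i - smallSum x (n - k)`.
-/

open Finset

lemma exists_sum_min_eq {ι : Type*} [Fintype ι] [Nonempty ι] (x : ι → ℝ) {s : ℝ}
    (hs : s ≤ ∑ i, x i) : ∃ t, ∑ i, min (x i) t = s := by
  obtain ⟨b, hb⟩ := (Set.finite_range x).bddAbove
  have hf : Continuous fun t => ∑ i, min (x i) t :=
    continuous_finsetSum _ fun i _ => continuous_const.min continuous_id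
  have hlow : ∑ i, min (x i) (s / Fintype.card ι) ≤ s := by
    calc ∑ i, min (x i) (s / Fintype.card ι) ≤ ∑ _i : ι, s / Fintype.card ι :=
          sum_le_sum fun i _ => min_le_right _ _
      _ = s := by rw [sum_const, card_univ, nsmul_eq_mul]; field_simp
  have hhigh : s ≤ ∑ i, min (x i) b := by
    simpa only [min_eq_left (hb (Set.mem_range_self _))] using hs
  obtain ⟨t, -, ht⟩ := intermediate_value_uIcc hf.continuousOn (Set.mem_uIcc_of_le hlow hhigh)
  exact ⟨t, ht⟩

section SmallSum

variable {n : ℕ}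

lemma smallSum_le_sum (x : Fin n → ℝ) {k : ℕ} {s : Finset (Fin n)} (hs : #s = k) :
    smallSum x k ≤ ∑ i ∈ s, x i :=
  csInf_le ((Set.toFinite _).image _).bddBelow ⟨s, hs, rfl⟩

lemma sum_le_largeSum (x : Fin n → ℝ) {k : ℕ} {s : Finset (Fin n)} (hs : #s = k) :
    ∑ i ∈ s, x i ≤ largeSum x k :=
  le_csSup ((Set.toFinite _).image _).bddAbove ⟨s, hs, rfl⟩

lemma nonempty_setOf_card_eq {k : ℕ} (hk : k ≤ n) : {s : Finset (Fin n) | #s = k}.Nonempty := by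
  obtain ⟨s, -, hs⟩ := exists_subset_card_eq (s := (univ : Finset (Fin n))) (by simpa using hk)
  exact ⟨s, hs⟩

lemma exists_sum_eq_smallSum (x : Fin n → ℝ) {k : ℕ} (hk : k ≤ n) :
    ∃ s : Finset (Fin n), #s = k ∧ ∑ i ∈ s, x i = smallSum x k := by
  obtain ⟨s, hs, h⟩ :=
    ((nonempty_setOf_card_eq hk).image fun s => ∑ i ∈ s, x i).csInf_mem ((Set.toFinite _).image _)
  exact ⟨s, hs, h⟩

lemma exists_sum_eq_largeSum (x : Fin n → ℝ) {k : ℕ} (hk : k ≤ n) :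
    ∃ s : Finset (Fin n), #s = k ∧ ∑ i ∈ s, x i = largeSum x k := by
  obtain ⟨s, hs, h⟩ :=
    ((nonempty_setOf_card_eq hk).image fun s => ∑ i ∈ s, x i).csSup_mem ((Set.toFinite _).image _)
  exact ⟨s, hs, h⟩

lemma smallSum_zero (x : Fin n → ℝ) : smallSum x 0 = 0 := by
  obtain ⟨s, hs, h⟩ := exists_sum_eq_smallSum x (Nat.zero_le n)
  rw [← h, card_eq_zero.mp hs, sum_empty]

lemma smallSum_eq_sum_univ (x : Fin n → ℝ) : smallSum x n = ∑ i, x i := by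
  obtain ⟨s, hs, h⟩ := exists_sum_eq_smallSum x le_rfl
  rw [← h, eq_univ_of_card s (by rw [hs, Fintype.card_fin])]

lemma smallSum_mono {x x' : Fin n → ℝ} (hx : ∀ i, x i ≤ x' i) {k : ℕ} (hk : k ≤ n) :
    smallSum x k ≤ smallSum x' k := by
  obtain ⟨s, hs, h⟩ := exists_sum_eq_smallSum x' hk
  exact h ▸ (smallSum_le_sum x hs).trans (sum_le_sum fun i _ => hx i)

lemma largeSum_add_smallSum (x : Fin n → ℝ) {k : ℕ} (hk : k ≤ n) :
    largeSum x k + smallSum x (n - k) = ∑ i, x i := by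
  apply le_antisymm
  · obtain ⟨s, hs, h⟩ := exists_sum_eq_largeSum x hk
    have := smallSum_le_sum x (s := sᶜ) (by rw [card_compl, hs, Fintype.card_fin])
    linarith [sum_add_sum_compl s x]
  · obtain ⟨s, hs, h⟩ := exists_sum_eq_smallSum x (Nat.sub_le n k)
    have := sum_le_largeSum x (k := k) (s := sᶜ) (by rw [card_compl, hs, Fintype.card_fin]; omega)
    linarith [sum_add_sum_compl s x]

lemma majorized_iff_smallSum_le {x y : Fin n → ℝ} :
    Majorized x y ↔ (∀ k ≤ n, smallSum y k ≤ smallSum x k) ∧ ∑ i, x i = ∑ i, y i := by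
  refine and_congr_left fun hsum => ⟨fun h k hk => ?_, fun h k hk => ?_⟩
  · have := h (n - k) (Nat.sub_le n k)
    have hx := largeSum_add_smallSum x (Nat.sub_le n k)
    have hy := largeSum_add_smallSum y (Nat.sub_le n k)
    rw [Nat.sub_sub_self hk] at hx hy
    linarith
  · linarith [h (n - k) (Nat.sub_le n k), largeSum_add_smallSum x hk,
      largeSum_add_smallSum y hk]

lemma WeakMajAbove.smallSum_le {x y : Fin n → ℝ} (h : WeakMajAbove x y) {k : ℕ} (hk : k ≤ n) :
    smallSum y k ≤ smallSum x k := by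
  rcases Nat.eq_zero_or_pos k with rfl | hk0
  · rw [smallSum_zero, smallSum_zero]
  · exact h k hk0 hk

lemma le_of_mem_of_notMem_of_sum_eq_smallSum {x : Fin n → ℝ} {s : Finset (Fin n)}
    (hs : ∑ i ∈ s, x i = smallSum x #s) {m i : Fin n} (hm : m ∈ s) (hi : i ∉ s) :
    x m ≤ x i := by
  have hcard : #(insert i (s.erase m)) = #s := by
    rw [card_insert_of_notMem fun h => hi (mem_of_mem_erase h), card_erase_of_mem hm]
    have := card_pos.mpr ⟨m, hm⟩
    omega
  have := smallSum_le_sum x hcard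
  rw [sum_insert (fun h => hi (mem_of_mem_erase h)), sum_erase_eq_sub hm] at this
  linarith

/-- Discrete convexity of `k ↦ smallSum y k`. -/
lemma smallSum_le_add_nsmul (y : Fin n → ℝ) {a j : ℕ} (haj : a ≤ j) (hjn : j ≤ n) {c t : ℝ}
    (ha : smallSum y a ≤ c) (hn : smallSum y n ≤ c + (n - a) • t) :
    smallSum y j ≤ c + (j - a) • t := by
  obtain ⟨J, hJ, hJsum⟩ := exists_sum_eq_smallSum y hjn
  by_cases hJt : ∀ m ∈ J, y m ≤ t
  · obtain ⟨A, hA, hAsum⟩ := exists_sum_eq_smallSum y (haj.trans hjn)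
    obtain ⟨C, hCJ, hC⟩ := exists_subset_card_eq (s := J \ A) (n := j - a)
      (by have := le_card_sdiff A J; omega)
    have hdisj : Disjoint A C := disjoint_sdiff.mono_right hCJ
    have hCt : ∑ i ∈ C, y i ≤ (j - a) • t :=
      hC ▸ sum_le_card_nsmul C y t fun i hi => hJt i (sdiff_subset (hCJ hi))
    calc smallSum y j ≤ ∑ i ∈ A ∪ C, y i :=
          smallSum_le_sum y (by rw [card_union_of_disjoint hdisj, hA, hC]; omega)
      _ = ∑ i ∈ A, y i + ∑ i ∈ C, y i := sum_union hdisj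
      _ ≤ c + (j - a) • t := add_le_add (hAsum ▸ ha) hCt
  · push Not at hJt
    obtain ⟨m, hm, htm⟩ := hJt
    have hJc : (n - j) • t ≤ ∑ i ∈ Jᶜ, y i := by
      have := card_nsmul_le_sum Jᶜ y t fun i hi =>
        htm.le.trans (le_of_mem_of_notMem_of_sum_eq_smallSum (hJ ▸ hJsum) hm (mem_compl.mp hi))
      rwa [card_compl, Fintype.card_fin, hJ] at this
    have hsplit : (n - a) • t = (j - a) • t + (n - j) • t := by
      rw [← add_nsmul]; congr 1; omega
    rw [smallSum_eq_sum_univ, ← sum_add_sum_compl J y, hJsum] at hn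
    linarith

lemma smallSum_le_smallSum_min {x y : Fin n → ℝ} (hxy : ∀ k ≤ n, smallSum y k ≤ smallSum x k)
    {t : ℝ} (ht : ∑ i, min (x i) t = ∑ i, y i) {j : ℕ} (hj : j ≤ n) :
    smallSum y j ≤ smallSum (fun i => min (x i) t) j := by
  obtain ⟨s, hs, hsum⟩ := exists_sum_eq_smallSum (fun i => min (x i) t) hj
  set A := {i ∈ s | x i < t}
  have hAj : #A ≤ j := hs ▸ card_filter_le s _
  have hs_split : ∑ i ∈ s, min (x i) t = ∑ i ∈ A, x i + (j - #A) • t := by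
    rw [← sum_filter_add_sum_filter_not s (fun i => x i < t)]
    have hcard : #{i ∈ s | ¬x i < t} = j - #A := by
      have := card_filter_add_card_filter_not (s := s) (fun i => x i < t)
      change #A + _ = #s at this
      omega
    rw [sum_congr rfl fun i hi => min_eq_left (mem_filter.mp hi).2.le,
      sum_congr rfl fun i hi => min_eq_right (not_lt.mp (mem_filter.mp hi).2),
      sum_const, hcard]
  have huniv : ∑ i, y i ≤ ∑ i ∈ A, x i + (n - #A) • t := by
    rw [← ht, ← sum_add_sum_compl A]
    refine add_le_add (sum_le_sum fun i _ => min_le_left _ _) ?_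
    have := sum_le_card_nsmul Aᶜ (fun i => min (x i) t) t fun i _ => min_le_right _ _
    rwa [card_compl, Fintype.card_fin] at this
  rw [← hsum, hs_split]
  refine smallSum_le_add_nsmul y hAj hj ?_ (smallSum_eq_sum_univ y ▸ huniv)
  exact (hxy _ (hAj.trans hj)).trans (smallSum_le_sum x rfl)

end SmallSum

/-- `x` is weakly majorized from above by `y` iff there exists `z` with `z i ≤ x i` for all `i` and `z` majorized by `y`. -/
theorem weakMajAbove_iff_exists_le {n : ℕ} (x y : Fin n → ℝ) :
    WeakMajAbove x y ↔ ∃ z : Fin n → ℝ, (∀ i, z i ≤ x i) ∧ Majorized z y := by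
  constructor
  · intro hw
    have hxy : ∀ k ≤ n, smallSum y k ≤ smallSum x k := fun k hk => hw.smallSum_le hk
    obtain ⟨t, ht⟩ : ∃ t, ∑ i, min (x i) t = ∑ i, y i := by
      rcases isEmpty_or_nonempty (Fin n) with _ | _
      · exact ⟨0, by simp⟩
      · refine exists_sum_min_eq x ?_
        simpa only [smallSum_eq_sum_univ] using hxy n le_rfl
    exact ⟨fun i => min (x i) t, fun i => min_le_left _ _,
      majorized_iff_smallSum_le.mpr ⟨fun k hk => smallSum_le_smallSum_min hxy ht hk, ht⟩⟩
  · rintro ⟨z, hzx, hzy⟩ k - hk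
    exact ((majorized_iff_smallSum_le.mp hzy).1 k hk).trans (smallSum_mono hzx hk)
end

section
/- Let A ∈ R^{n×n} have all eigenvalues with positive real part, B ∈ R^{n×m}, and suppose the algebraic Riccati equation AᵀX + XA - XBBᵀX = 0 has a symmetric solution X such that A - BBᵀX is stable (all eigenvalues with negative real part). Then, with F = -BᵀX, the closed-loop transfer function T(s) = F(sI - A - BF)^{-1}B satisfies ‖T‖₂² = tr(BᵀXB) = 2·tr(A) = 2·H(A). -/
open Polynomial Matrix

section Aux
variable {k : ℕ}

lemma myCharpolyTranspose {R : Type*} [CommRing R] (M : Matrix (Fin k) (Fin k) R) :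
    M.transpose.charpoly = M.charpoly := by
  have h : charmatrix Mᵀ = (charmatrix M)ᵀ := by
    ext i j
    by_cases h : i = j
    · subst h; simp [charmatrix_apply]
    · simp [charmatrix_apply, Matrix.diagonal_apply_ne _ h, Matrix.diagonal_apply_ne _ (Ne.symm h)]
  rw [Matrix.charpoly, h, Matrix.det_transpose, Matrix.charpoly]

lemma myEvalCharpoly {R : Type*} [CommRing R] (M : Matrix (Fin k) (Fin k) R) (r : R) :
    M.charpoly.eval r = (Matrix.scalar (Fin k) r - M).det := by
  rw [Matrix.charpoly, _root_.eval_det, matPolyEquiv_charmatrix]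
  simp

lemma myMemRootsOfEig (M : Matrix (Fin k) (Fin k) ℂ) (μ : ℂ) (v : Fin k → ℂ)
    (hv : v ≠ 0) (h : M *ᵥ v = μ • v) : μ ∈ M.charpoly.roots := by
  rw [Polynomial.mem_roots (M.charpoly_monic.ne_zero)]
  show M.charpoly.eval μ = 0
  rw [myEvalCharpoly]
  rw [← Matrix.exists_mulVec_eq_zero_iff]
  refine ⟨v, hv, ?_⟩
  rw [Matrix.sub_mulVec, h]
  have : (Matrix.scalar (Fin k) μ) *ᵥ v = μ • v := by
    ext i
    simp [Matrix.scalar_apply, Matrix.mulVec_diagonal]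
  rw [this, sub_self]

lemma myPowMulComm {R : Type*} [CommRing R] {M N D : Matrix (Fin k) (Fin k) R}
    (h : M * D = D * N) : ∀ i : ℕ, M ^ i * D = D * N ^ i := by
  intro i
  induction i with
  | zero => simp
  | succ i ih =>
    rw [pow_succ, pow_succ, mul_assoc, h, ← mul_assoc, ih, mul_assoc]

lemma myAevalMulComm {R : Type*} [CommRing R] {M N D : Matrix (Fin k) (Fin k) R}
    (h : M * D = D * N) (p : R[X]) :
    (Polynomial.aeval M p) * D = D * (Polynomial.aeval N p) := by
  rw [Polynomial.aeval_eq_sum_range (p := p) (x := M),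
      Polynomial.aeval_eq_sum_range (p := p) (x := N),
      Finset.sum_mul, Finset.mul_sum]
  refine Finset.sum_congr rfl fun i _ => ?_
  rw [smul_mul_assoc, myPowMulComm h i, mul_smul_comm]

lemma myMapNeg {R S : Type*} [Ring R] [Ring S] (g : R →+* S) (M : Matrix (Fin k) (Fin k) R) :
    (-M).map g = -(M.map g) := by
  ext i j
  simp [Matrix.map_apply]

lemma myDetAevalNeg (M : Matrix (Fin k) (Fin k) ℂ)
    (hs : ∀ μ ∈ M.charpoly.roots, μ.re < 0) :
    (Polynomial.aeval (-M) M.charpoly).det ≠ 0 := by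
  have hmonic := M.charpoly_monic
  have hsplit : M.charpoly.Splits := IsAlgClosed.splits _
  have hfact := hsplit.eq_prod_roots_of_monic hmonic
  set L := M.charpoly.roots.toList with hLdef
  have hLmem : ∀ r ∈ L, r ∈ M.charpoly.roots := fun r hr => (Multiset.mem_toList).1 hr
  have hprod : M.charpoly = (L.map (fun r => X - C r)).prod := by
    conv_lhs => rw [hfact]
    rw [hLdef, ← Multiset.coe_toList M.charpoly.roots, Multiset.map_coe, Multiset.prod_coe,
        Multiset.coe_toList]
  have key : ∀ r ∈ L, (Polynomial.aeval (-M) (X - C r)).det ≠ 0 := by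
    intro r hr
    have h1 : Polynomial.aeval (-M) (X - C r) = Matrix.scalar (Fin k) (-r) - M := by
      rw [map_sub, Polynomial.aeval_X, Polynomial.aeval_C, map_neg]
      show -M - algebraMap ℂ _ r = _
      have : algebraMap ℂ (Matrix (Fin k) (Fin k) ℂ) r = Matrix.scalar (Fin k) r := rfl
      rw [this]
      abel
    rw [h1, ← myEvalCharpoly]
    intro h0
    have hmem : -r ∈ M.charpoly.roots := by
      rw [Polynomial.mem_roots hmonic.ne_zero]; exact h0
    have h2 := hs _ hmem
    have h3 := hs _ (hLmem r hr)
    simp only [Complex.neg_re] at h2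
    linarith
  rw [hprod]
  rw [map_list_prod (Polynomial.aeval (-M) : ℂ[X] →ₐ[ℂ] _), List.map_map]
  rw [← Matrix.coe_detMonoidHom, map_list_prod (Matrix.detMonoidHom (n := Fin k) (R := ℂ)), List.map_map]
  apply List.prod_ne_zero
  intro h0
  rw [List.mem_map] at h0
  obtain ⟨r, hr, hr0⟩ := h0
  exact key r hr (by simpa [Matrix.coe_detMonoidHom] using hr0)

end Aux

open Polynomial in
/-- The multiset of complex eigenvalues (with algebraic multiplicity) of a real matrix. -/
noncomputable def cEigs {m : ℕ} (M : Matrix (Fin m) (Fin m) ℝ) : Multiset ℂ :=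
  ((M.charpoly.map (algebraMap ℝ ℂ)).roots)

/-- Topological entropy `H(M)`: sum of real parts of eigenvalues with positive real part. -/
noncomputable def topEntropy {m : ℕ} (M : Matrix (Fin m) (Fin m) ℝ) : ℝ :=
  (((cEigs M).filter (fun mu => 0 < mu.re)).map Complex.re).sum

/-- With `X` a stabilizing symmetric solution of the Riccati equation
`AᵀX + XA - XBBᵀX = 0` and `F = -BᵀX`, the closed-loop H₂ norm squared—given by
`tr(Bᵀ P B)` for any symmetric `P` solving the closed-loop Lyapunov equation
`(A+BF)ᵀP + P(A+BF) + FᵀF = 0`—equals `tr(BᵀXB) = 2 tr(A) = 2 H(A)`. -/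
theorem riccati_h2_norm {n m : ℕ}
    (A : Matrix (Fin n) (Fin n) ℝ) (B : Matrix (Fin n) (Fin m) ℝ)
    (X : Matrix (Fin n) (Fin n) ℝ)
    (hA : ∀ mu ∈ cEigs A, 0 < mu.re)
    (hXs : X.IsSymm)
    (hric : A.transpose * X + X * A - X * B * B.transpose * X = 0)
    (hstable : ∀ mu ∈ cEigs (A - B * B.transpose * X), mu.re < 0) :
    (∀ P : Matrix (Fin n) (Fin n) ℝ, P.IsSymm →
      ((A + B * (-(B.transpose * X))).transpose * P
          + P * (A + B * (-(B.transpose * X)))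
          + (-(B.transpose * X)).transpose * (-(B.transpose * X)) = 0) →
      Matrix.trace (B.transpose * P * B) = 2 * topEntropy A) ∧
    Matrix.trace (B.transpose * X * B) = 2 * Matrix.trace A ∧
    Matrix.trace A = topEntropy A := by
  classical
  have hXt : X.transpose = X := hXs
  set f : ℝ →+* ℂ := (algebraMap ℝ ℂ) with hf
  set Acl := A - B * B.transpose * X with hAclDef
  have hric' : A.transpose * X + (X * A - X * B * B.transpose * X) = 0 := by
    rw [← add_sub_assoc]; exact hric
  have h1 : X * A - X * B * B.transpose * X = -(A.transpose * X) :=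
    eq_neg_of_add_eq_zero_right hric'
  have hkey : X * Acl = -(A.transpose * X) := by
    rw [hAclDef, ← h1]
    simp [Matrix.mul_sub, Matrix.mul_assoc]
  have hAclT : Acl.transpose = A.transpose - X * B * B.transpose := by
    rw [hAclDef]
    simp [Matrix.transpose_sub, Matrix.transpose_mul, hXt, Matrix.mul_assoc]
  have cEigs_eq : ∀ M : Matrix (Fin n) (Fin n) ℝ, cEigs M = (M.map f).charpoly.roots := by
    intro M; rw [cEigs, Matrix.charpoly_map]
  -- X is invertible
  have hXdet : IsUnit X.det := by
    rw [isUnit_iff_ne_zero]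
    intro hdet0
    have hdetC : (X.map f).det = 0 := by
      rw [← RingHom.mapMatrix_apply, ← RingHom.map_det, hdet0, map_zero]
    obtain ⟨v, hv, hXv⟩ := (Matrix.exists_mulVec_eq_zero_iff).2 hdetC
    set Mcl := Acl.map f with hMclDef
    have hXMcl : X.map f * Mcl = -((A.map f).transpose * X.map f) := by
      have e1 : X.map f * Mcl = (X * Acl).map f := (Matrix.map_mul).symm
      have e2 : (A.map f).transpose * X.map f = (A.transpose * X).map f := by
        rw [← Matrix.transpose_map]; exact (Matrix.map_mul).symm
      rw [e1, e2, hkey, myMapNeg]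
    let K : Submodule ℂ (Fin n → ℂ) := LinearMap.ker (Matrix.mulVecLin (X.map f))
    have hKinv : ∀ w ∈ K, (Matrix.mulVecLin Mcl) w ∈ K := by
      intro w hw
      have hw' : X.map f *ᵥ w = 0 := hw
      show X.map f *ᵥ (Mcl *ᵥ w) = 0
      rw [Matrix.mulVec_mulVec, hXMcl, Matrix.neg_mulVec, ← Matrix.mulVec_mulVec, hw',
        Matrix.mulVec_zero, neg_zero]
    let e : Module.End ℂ K := LinearMap.restrict (Matrix.mulVecLin Mcl) hKinv
    have hvK : v ∈ K := hXv
    haveI : Nontrivial K :=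
      ⟨⟨⟨v, hvK⟩, 0, fun h => hv (congrArg Subtype.val h)⟩⟩
    obtain ⟨μ, hμ⟩ := Module.End.exists_eigenvalue e
    obtain ⟨w, hw⟩ := hμ.exists_hasEigenvector
    have hwne : (w : Fin n → ℂ) ≠ 0 := fun h0 => hw.2 (by exact Subtype.ext h0)
    have hMclw : Mcl *ᵥ (w : Fin n → ℂ) = μ • (w : Fin n → ℂ) := by
      have h2 : ((e w : K) : Fin n → ℂ) = ((μ • w : K) : Fin n → ℂ) :=
        congrArg Subtype.val hw.apply_eq_smul
      rw [LinearMap.restrict_coe_apply, Matrix.mulVecLin_apply] at h2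
      exact h2
    have hXw : X.map f *ᵥ (w : Fin n → ℂ) = 0 := w.2
    have hAw : A.map f *ᵥ (w : Fin n → ℂ) = μ • (w : Fin n → ℂ) := by
      have hAeq : A.map f = Mcl + ((B * B.transpose).map f) * (X.map f) := by
        have e3 : A = Acl + B * B.transpose * X := by rw [hAclDef]; abel
        rw [hMclDef, ← Matrix.map_mul, ← Matrix.map_add _ (map_add f), ← e3]
      rw [hAeq, Matrix.add_mulVec, ← Matrix.mulVec_mulVec, hXw, Matrix.mulVec_zero, add_zero,
        hMclw]
    have hμA : μ ∈ cEigs A := by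
      rw [cEigs_eq]; exact myMemRootsOfEig _ μ _ hwne hAw
    have hμAcl : μ ∈ cEigs Acl := by
      rw [cEigs_eq]; exact myMemRootsOfEig _ μ _ hwne hMclw
    have := hA μ hμA
    have := hstable μ hμAcl
    linarith
  -- trace of Acl
  have htrAcl : Matrix.trace Acl = - Matrix.trace A := by
    have h2 : X⁻¹ * (X * Acl) = Acl := by
      rw [← mul_assoc, Matrix.nonsing_inv_mul X hXdet, one_mul]
    calc Matrix.trace Acl = Matrix.trace (X⁻¹ * (X * Acl)) := by rw [h2]
      _ = Matrix.trace ((X * Acl) * X⁻¹) := Matrix.trace_mul_comm _ _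
      _ = - Matrix.trace A := by
          rw [hkey, Matrix.neg_mul, Matrix.trace_neg, mul_assoc,
            Matrix.mul_nonsing_inv X hXdet, mul_one, Matrix.trace_transpose]
  have part2 : Matrix.trace (B.transpose * X * B) = 2 * Matrix.trace A := by
    calc Matrix.trace (B.transpose * X * B) = Matrix.trace (B * (B.transpose * X)) :=
          Matrix.trace_mul_comm _ _
      _ = Matrix.trace (A - Acl) := by
          congr 1
          rw [← Matrix.mul_assoc, hAclDef]
          abel
      _ = 2 * Matrix.trace A := by rw [Matrix.trace_sub, htrAcl]; ring
  have part3 : Matrix.trace A = topEntropy A := by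
    rw [topEntropy, Multiset.filter_eq_self.mpr hA]
    have h2 : ((cEigs A).map Complex.re).sum = ((cEigs A).sum).re :=
      (map_multiset_sum Complex.reAddGroupHom (cEigs A)).symm
    rw [h2, cEigs_eq, ← Matrix.trace_eq_sum_roots_charpoly]
    have h3 : Matrix.trace (A.map f) = Complex.ofReal (Matrix.trace A) := by
      simp [Matrix.trace, Matrix.map_apply, Matrix.diag, hf, Complex.coe_algebraMap]
    rw [h3, Complex.ofReal_re]
  refine ⟨?_, part2, part3⟩
  intro P hPs hP
  have hsimp1 : A + B * (-(B.transpose * X)) = Acl := by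
    rw [hAclDef, Matrix.mul_neg, ← Matrix.mul_assoc, ← sub_eq_add_neg]
  have hsimp2 : (-(B.transpose * X)).transpose * (-(B.transpose * X))
      = X * B * B.transpose * X := by
    rw [Matrix.transpose_neg, Matrix.transpose_mul, hXt, Matrix.transpose_transpose,
      Matrix.neg_mul, Matrix.mul_neg, neg_neg, ← Matrix.mul_assoc]
  rw [hsimp1, hsimp2] at hP
  have hX2 : Acl.transpose * X + X * Acl + X * B * B.transpose * X = 0 := by
    rw [hAclT, hkey]
    noncomm_ring
  have h3 : Acl.transpose * P + P * Acl = Acl.transpose * X + X * Acl :=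
    add_right_cancel (hP.trans hX2.symm)
  have hD : Acl.transpose * (P - X) = (P - X) * (-Acl) := by
    have h4 : Acl.transpose * P - Acl.transpose * X = X * Acl - P * Acl := by
      rw [sub_eq_sub_iff_add_eq_add, add_comm (X * Acl)]
      exact h3
    rw [Matrix.mul_sub, Matrix.sub_mul, h4, mul_neg, mul_neg]
    abel
  set q := Acl.charpoly with hq
  set G := Polynomial.aeval (-Acl) q with hG
  have h5 : (P - X) * G = 0 := by
    have h6 := myAevalMulComm hD (Acl.transpose.charpoly)
    rw [Matrix.aeval_self_charpoly, Matrix.zero_mul, myCharpolyTranspose] at h6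
    rw [hG, hq]
    exact h6.symm
  have hGdet : IsUnit G.det := by
    rw [isUnit_iff_ne_zero]
    intro h0
    have hmap : G.map f = Polynomial.aeval (-(Acl.map f)) ((Acl.map f).charpoly) := by
      have e0 : ∀ M : Matrix (Fin n) (Fin n) ℝ,
          (Algebra.ofId ℝ ℂ).mapMatrix M = M.map f := fun M => rfl
      have e1 := Polynomial.aeval_algHom_apply
        ((Algebra.ofId ℝ ℂ).mapMatrix (m := Fin n)) (-Acl) q
      simp only [e0] at e1
      rw [hG, ← e1, Matrix.charpoly_map, myMapNeg]
      exact (Polynomial.aeval_map_algebraMap ℂ _ q).symm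
    have h7 : (G.map f).det = 0 := by
      rw [← RingHom.mapMatrix_apply, ← RingHom.map_det, h0, map_zero]
    have h8 := myDetAevalNeg (Acl.map f)
      (fun μ hμ => hstable μ (by rw [cEigs_eq, hAclDef]; exact hμ))
    rw [← hmap] at h8
    exact h8 h7
  have hPX : P = X := by
    have h9 : (P - X) * (G * G⁻¹) = 0 := by
      rw [← mul_assoc, h5, Matrix.zero_mul]
    rw [Matrix.mul_nonsing_inv G hGdet, mul_one] at h9
    exact sub_eq_zero.mp h9
  rw [hPX, part2, part3]
end

section
/- For a nonnegative square matrix G (entrywise nonnegative, m×m), the spectral radius satisfies ρ(G) = inf over diagonal matrices D with positive diagonal entries of the maximum column sum of D^{-1} G D, and also equals the infimum over such D of the maximum row sum of D^{-1} G D. -/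
/-!
Conjugating by a positive diagonal matrix `D` leaves the spectrum unchanged, and the maximum
row sum and the maximum column sum both bound the spectral radius, so `ρ(G)` is a lower bound.
Conversely, for `P > ρ(G)` Gelfand's formula gives `N > 0` with `G ^ N *ᵥ 1 ≤ P ^ N • 1`. Then
`x = ∑_{k<N} P^(N-1-k) • G ^ k *ᵥ 1` is positive, and the geometric-sum identity
`(P - G) ∑_{k<N} P^(N-1-k) G^k = P^N - G^N` gives `P • x - G *ᵥ x = P ^ N • 1 - G ^ N *ᵥ 1 ≥ 0`.
Hence every row sum of `(diagonal x)⁻¹ * G * diagonal x` is at most `P`. Columns follow by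
transposing, which replaces `D` by `D⁻¹`.
-/

/-- The spectral radius of a real square matrix: supremum of the moduli of its complex
eigenvalues. -/
noncomputable def specRad {m : ℕ} (G : Matrix (Fin m) (Fin m) ℝ) : ℝ :=
  sSup ((fun (mu : ℂ) => ‖mu‖) '' spectrum ℂ (G.map (algebraMap ℝ ℂ)))

noncomputable def colNorm {m : ℕ} (Z : Matrix (Fin m) (Fin m) ℝ) : ℝ :=
  ⨆ j, ∑ i, |Z i j|

noncomputable def rowNorm {m : ℕ} (Z : Matrix (Fin m) (Fin m) ℝ) : ℝ :=
  ⨆ i, ∑ j, |Z i j|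

open Matrix Filter Finset
open scoped NNReal ENNReal

attribute [local instance] Matrix.linftyOpNormedRing Matrix.linftyOpNormedAlgebra

theorem eventually_nnnorm_pow_lt_of_spectralRadius_lt {A : Type*} [NormedRing A]
    [NormedAlgebra ℂ A] [CompleteSpace A] {a : A} {r : ℝ≥0} (h : spectralRadius ℂ a < r) :
    ∀ᶠ n in atTop, ‖a ^ n‖₊ < r ^ n := by
  have gelfand := spectrum.pow_nnnorm_pow_one_div_tendsto_nhds_spectralRadius a
  filter_upwards [gelfand.eventually_lt_const h, eventually_gt_atTop 0] with n hn hn0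
  rw [one_div, ENNReal.rpow_inv_lt_iff (Nat.cast_pos.mpr hn0), ENNReal.rpow_natCast] at hn
  exact_mod_cast hn

lemma exists_pos_mulVec_le_smul {n R : Type*} [Fintype n] [DecidableEq n] [Field R]
    [LinearOrder R] [IsStrictOrderedRing R] {G : Matrix n n R} (hG : ∀ i j, 0 ≤ G i j) {P : R}
    (hP : 0 < P) {N : ℕ} (hN : 0 < N) (hGN : ∀ i, (G ^ N *ᵥ 1) i ≤ P ^ N) :
    ∃ x : n → R, (∀ i, 0 < x i) ∧ ∀ i, (G *ᵥ x) i ≤ P * x i := by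
  set Q := ∑ k ∈ range N, P ^ (N - 1 - k) • G ^ k
  have hgeom : (P • 1 - G) * Q = P ^ N • 1 - G ^ N := by
    have := ((Commute.one_right G).smul_right P).mul_neg_geom_sum₂ N
    simpa [Q, smul_pow, mul_smul_comm] using this
  have hQ : ∀ i, (Q *ᵥ 1) i = ∑ k ∈ range N, P ^ (N - 1 - k) * (G ^ k *ᵥ 1) i := by
    intro i
    simp [Q, sum_mulVec, smul_mulVec]
  refine ⟨Q *ᵥ 1, fun i => ?_, fun i => ?_⟩
  · have hterm : ∀ k, 0 ≤ P ^ (N - 1 - k) * (G ^ k *ᵥ 1) i := fun k =>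
      mul_nonneg (pow_nonneg hP.le _)
        (sum_nonneg fun j _ => mul_nonneg (pow_apply_nonneg hG k i j) zero_le_one)
    calc 0 < P ^ (N - 1) := pow_pos hP _
      _ = P ^ (N - 1 - 0) * (G ^ 0 *ᵥ 1) i := by simp
      _ ≤ (Q *ᵥ 1) i := hQ i ▸ single_le_sum (fun k _ => hterm k) (mem_range.mpr hN)
  · have hdiff := congrFun (congrArg (· *ᵥ (1 : n → R)) hgeom) i
    simp only [← mulVec_mulVec, sub_mulVec, smul_mulVec, one_mulVec, Pi.sub_apply,
      Pi.smul_apply, smul_eq_mul, Pi.one_apply, mul_one] at hdiff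
    linarith [hGN i]

section DiagonalScaling

variable {n K : Type*} [Fintype n] [DecidableEq n] [Field K]

lemma inv_diagonal_of_ne_zero {d : n → K} (hd : ∀ i, d i ≠ 0) :
    (diagonal d)⁻¹ = diagonal d⁻¹ :=
  inv_eq_left_inv <| by
    rw [diagonal_mul_diagonal, ← diagonal_one]
    exact congrArg diagonal (funext fun i => inv_mul_cancel₀ (hd i))

lemma inv_diagonal_mul_mul_diagonal_apply (G : Matrix n n K) {d : n → K} (hd : ∀ i, d i ≠ 0)
    (i j : n) : ((diagonal d)⁻¹ * G * diagonal d) i j = (d i)⁻¹ * G i j * d j := by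
  rw [inv_diagonal_of_ne_zero hd, mul_diagonal, diagonal_mul, Pi.inv_apply]

lemma transpose_inv_diagonal_mul_mul_diagonal (G : Matrix n n K) {d : n → K}
    (hd : ∀ i, d i ≠ 0) :
    ((diagonal d)⁻¹ * G * diagonal d)ᵀ = (diagonal d⁻¹)⁻¹ * Gᵀ * diagonal d⁻¹ := by
  have hd' : ∀ i, d⁻¹ i ≠ 0 := fun i => inv_ne_zero (hd i)
  ext i j
  rw [transpose_apply, inv_diagonal_mul_mul_diagonal_apply G hd,
    inv_diagonal_mul_mul_diagonal_apply Gᵀ hd', Pi.inv_apply, Pi.inv_apply, inv_inv,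
    transpose_apply]
  ring

end DiagonalScaling

lemma rowNorm_eq_norm_map {m : ℕ} (Z : Matrix (Fin m) (Fin m) ℝ) :
    rowNorm Z = ‖Z.map (algebraMap ℝ ℂ)‖ := by
  rw [linfty_opNorm_def, rowNorm, Finset.sup_univ_eq_ciSup, NNReal.coe_iSup]
  simp [Real.norm_eq_abs]

lemma colNorm_eq_rowNorm_transpose {m : ℕ} (Z : Matrix (Fin m) (Fin m) ℝ) :
    colNorm Z = rowNorm Zᵀ := rfl

lemma specRad_nonneg {m : ℕ} (G : Matrix (Fin m) (Fin m) ℝ) : 0 ≤ specRad G :=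
  Real.sSup_nonneg (by rintro _ ⟨μ, -, rfl⟩; exact norm_nonneg μ)

lemma specRad_inv_mul_mul {m : ℕ} (G : Matrix (Fin m) (Fin m) ℝ) {P : Matrix (Fin m) (Fin m) ℝ}
    (hP : IsUnit P) : specRad (P⁻¹ * G * P) = specRad G := by
  obtain ⟨u, rfl⟩ := hP
  let f := (algebraMap ℝ ℂ).mapMatrix (m := Fin m)
  have hconj : f (u⁻¹.val * G * u.val)
      = (Units.map f.toMonoidHom u)⁻¹.val * f G * (Units.map f.toMonoidHom u).val := by
    simp only [map_mul, Units.coe_map_inv, Units.coe_map, RingHom.toMonoidHom_eq_coe,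
      MonoidHom.coe_coe]
  rw [← coe_units_inv]
  change sSup (_ '' spectrum ℂ (f (u⁻¹.val * G * u.val))) = sSup (_ '' spectrum ℂ (f G))
  rw [hconj, spectrum.units_conjugate']

lemma specRad_transpose {m : ℕ} (G : Matrix (Fin m) (Fin m) ℝ) : specRad Gᵀ = specRad G := by
  rw [specRad, specRad, transpose_map]
  congr 2
  ext μ
  rw [spectrum.mem_iff, spectrum.mem_iff, ← isUnit_transpose]
  simp [transpose_sub, algebraMap_eq_diagonal]

lemma specRad_le_rowNorm {m : ℕ} (G : Matrix (Fin m) (Fin m) ℝ) : specRad G ≤ rowNorm G := by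
  rw [rowNorm_eq_norm_map]
  refine Real.sSup_le ?_ (norm_nonneg _)
  rintro _ ⟨μ, hμ, rfl⟩
  cases isEmpty_or_nonempty (Fin m)
  · exact absurd (isUnit_of_subsingleton _) (spectrum.mem_iff.mp hμ)
  · exact spectrum.norm_le_norm_of_mem hμ

lemma specRad_le_colNorm {m : ℕ} (G : Matrix (Fin m) (Fin m) ℝ) : specRad G ≤ colNorm G :=
  specRad_transpose G ▸ specRad_le_rowNorm Gᵀ

lemma spectralRadius_map_le_specRad {m : ℕ} (G : Matrix (Fin m) (Fin m) ℝ) :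
    spectralRadius ℂ (G.map (algebraMap ℝ ℂ)) ≤ ENNReal.ofReal (specRad G) := by
  refine iSup₂_le fun μ hμ => ?_
  rw [← ENNReal.ofReal_coe_nnreal, coe_nnnorm]
  exact ENNReal.ofReal_le_ofReal <|
    le_csSup (((finite_spectrum _).image _).bddAbove) (Set.mem_image_of_mem _ hμ)

lemma eventually_rowNorm_pow_lt {m : ℕ} {G : Matrix (Fin m) (Fin m) ℝ} {P : ℝ}
    (hP : specRad G < P) : ∀ᶠ n in atTop, rowNorm (G ^ n) < P ^ n := by
  have : CompleteSpace (Matrix (Fin m) (Fin m) ℂ) := FiniteDimensional.complete ℂ _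
  have hP₀ : 0 < P := (specRad_nonneg G).trans_lt hP
  have hlt : spectralRadius ℂ (G.map (algebraMap ℝ ℂ)) < P.toNNReal :=
    (spectralRadius_map_le_specRad G).trans_lt ((ENNReal.ofReal_lt_ofReal_iff hP₀).mpr hP)
  filter_upwards [eventually_nnnorm_pow_lt_of_spectralRadius_lt hlt] with n hn
  rw [rowNorm_eq_norm_map, ← RingHom.mapMatrix_apply, map_pow, RingHom.mapMatrix_apply,
    ← coe_nnnorm, ← Real.coe_toNNReal P hP₀.le, ← NNReal.coe_pow]
  exact_mod_cast hn

lemma mulVec_one_apply_le_rowNorm {m : ℕ} (A : Matrix (Fin m) (Fin m) ℝ) (i : Fin m) :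
    (A *ᵥ 1) i ≤ rowNorm A :=
  calc (A *ᵥ 1) i = ∑ j, A i j := by simp [mulVec, dotProduct]
    _ ≤ ∑ j, |A i j| := sum_le_sum fun j _ => le_abs_self _
    _ ≤ rowNorm A := le_ciSup (f := fun i => ∑ j, |A i j|) (Set.finite_range _).bddAbove i

lemma rowNorm_inv_diagonal_mul_mul_diagonal_le {m : ℕ} {G : Matrix (Fin m) (Fin m) ℝ}
    (hG : ∀ i j, 0 ≤ G i j) {x : Fin m → ℝ} (hx : ∀ i, 0 < x i) {P : ℝ} (hP : 0 ≤ P)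
    (hGx : ∀ i, (G *ᵥ x) i ≤ P * x i) :
    rowNorm ((diagonal x)⁻¹ * G * diagonal x) ≤ P := by
  refine Real.iSup_le (fun i => ?_) hP
  have hrow : ∑ j, |((diagonal x)⁻¹ * G * diagonal x) i j| = (x i)⁻¹ * (G *ᵥ x) i := by
    simp only [inv_diagonal_mul_mul_diagonal_apply G (fun k => (hx k).ne'), mulVec,
      dotProduct, mul_sum, mul_assoc]
    refine sum_congr rfl fun j _ => abs_of_nonneg ?_
    have := hx i; have := hx j; have := hG i j
    positivity
  rw [hrow, inv_mul_le_iff₀ (hx i), mul_comm]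
  exact hGx i

lemma exists_rowNorm_diagonal_scaling_le {m : ℕ} {G : Matrix (Fin m) (Fin m) ℝ}
    (hG : ∀ i j, 0 ≤ G i j) {P : ℝ} (hP : specRad G < P) :
    ∃ d : Fin m → ℝ, (∀ i, 0 < d i) ∧ rowNorm ((diagonal d)⁻¹ * G * diagonal d) ≤ P := by
  have hP₀ : 0 < P := (specRad_nonneg G).trans_lt hP
  obtain ⟨N, hN, hGN⟩ := ((eventually_rowNorm_pow_lt hP).and (eventually_gt_atTop 0)).exists
  obtain ⟨x, hx, hGx⟩ := exists_pos_mulVec_le_smul hG hP₀ hGN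
    fun i => (mulVec_one_apply_le_rowNorm _ i).trans hN.le
  exact ⟨x, hx, rowNorm_inv_diagonal_mul_mul_diagonal_le hG hx hP₀.le hGx⟩

lemma specRad_eq_sInf_diagonal_scaling {m : ℕ} {G : Matrix (Fin m) (Fin m) ℝ}
    (f : Matrix (Fin m) (Fin m) ℝ → ℝ) (hf : ∀ M, specRad M ≤ f M)
    (happrox : ∀ P, specRad G < P → ∃ d : Fin m → ℝ, (∀ i, 0 < d i) ∧
      f ((diagonal d)⁻¹ * G * diagonal d) ≤ P) :
    specRad G = sInf {r : ℝ | ∃ d : Fin m → ℝ, (∀ i, 0 < d i) ∧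
      r = f ((diagonal d)⁻¹ * G * diagonal d)} := by
  symm
  refine csInf_eq_of_forall_ge_of_forall_gt_exists_lt
    ⟨_, fun _ => 1, fun _ => one_pos, rfl⟩ ?_ ?_
  · rintro _ ⟨d, hd, rfl⟩
    have hu : IsUnit (diagonal d) :=
      isUnit_diagonal.mpr (Pi.isUnit_iff.mpr fun i => (hd i).ne'.isUnit)
    exact specRad_inv_mul_mul G hu ▸ hf _
  · intro w hw
    obtain ⟨P, hGP, hPw⟩ := exists_between hw
    obtain ⟨d, hd, hle⟩ := happrox P hGP
    exact ⟨_, ⟨d, hd, rfl⟩, hle.trans_lt hPw⟩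

/-- For an entrywise nonnegative matrix `G`, the spectral radius equals the infimum over
positive diagonal scalings `D` of the maximum column sum of `D⁻¹ G D`, and likewise of
the maximum row sum. -/
theorem specRad_eq_inf_diag_scaling {m : ℕ} (G : Matrix (Fin m) (Fin m) ℝ)
    (hG : ∀ i j, 0 ≤ G i j) :
    specRad G = sInf {r : ℝ | ∃ d : Fin m → ℝ, (∀ i, 0 < d i) ∧
        r = colNorm ((Matrix.diagonal d)⁻¹ * G * Matrix.diagonal d)} ∧
    specRad G = sInf {r : ℝ | ∃ d : Fin m → ℝ, (∀ i, 0 < d i) ∧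
        r = rowNorm ((Matrix.diagonal d)⁻¹ * G * Matrix.diagonal d)} := by
  refine ⟨specRad_eq_sInf_diagonal_scaling colNorm specRad_le_colNorm fun P hP => ?_,
    specRad_eq_sInf_diagonal_scaling rowNorm specRad_le_rowNorm fun P hP =>
      exists_rowNorm_diagonal_scaling_le hG hP⟩
  obtain ⟨d, hd, hle⟩ :=
    exists_rowNorm_diagonal_scaling_le (G := Gᵀ) (fun i j => hG j i) (specRad_transpose G ▸ hP)
  refine ⟨d⁻¹, fun i => inv_pos.mpr (hd i), ?_⟩
  rwa [colNorm_eq_rowNorm_transpose,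
    transpose_inv_diagonal_mul_mul_diagonal G (d := d⁻¹) fun i => inv_ne_zero (hd i).ne',
    inv_inv]
end
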